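/- Let α, β, γ be the three complex roots of x³ − x − 1, with α the real root, and set a = (α+1)/((α−β)(α−γ)), b = (β+1)/((β−α)(β−γ)), c = (γ+1)/((γ−α)(γ−β)). Then a, b, c are the three roots of the polynomial 23x³ − 5x − 1; moreover |a|, |b|, |c| < 1, and in fact 0.54 < a < 0.55 and 0.28 < |b| = |c| < 0.29. -/

import Mathlib

/-!
For pairwise distinct roots `x, y, z` of `X³ - X - 1`, Vieta's formulas give
`x (x - y) (x - z) = 2x + 3`, so the Binet coefficient of `x` is `(x² + x) / (2x + 3)`.
Eliminating `x` from `t (2x + 3) = x² + x` and `x³ = x + 1` gives `23t³ - 5t - 1 = 0`.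
Since `α` is real and `γ = β̄`, `a` is real and `c = b̄`; the product of the three
coefficients is `1/23`, so `|b|² = 1 / (23a)`, and the bounds on `|b|` follow from those on `a`.
-/

section Field

variable {K : Type*} [Field K] {x y z : K}

lemma sq_add_mul_add_sq_eq_one (hx : x ^ 3 = x + 1) (hy : y ^ 3 = y + 1) (hxy : x ≠ y) :
    x ^ 2 + x * y + y ^ 2 = 1 := by
  have h : (x - y) * (x ^ 2 + x * y + y ^ 2 - 1) = 0 := by linear_combination hx - hy
  linear_combination (mul_eq_zero.mp h).resolve_left (sub_ne_zero.mpr hxy)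

lemma vieta_of_cube_eq_add_one (hx : x ^ 3 = x + 1) (hy : y ^ 3 = y + 1) (hz : z ^ 3 = z + 1)
    (hxy : x ≠ y) (hxz : x ≠ z) (hyz : y ≠ z) :
    x + y + z = 0 ∧ x * y + y * z + z * x = -1 ∧ x * y * z = 1 := by
  have hxy' := sq_add_mul_add_sq_eq_one hx hy hxy
  have hyz' := sq_add_mul_add_sq_eq_one hy hz hyz
  have e1 : x + y + z = 0 := by
    have h : (x - z) * (x + y + z) = 0 := by linear_combination hxy' - hyz'
    exact (mul_eq_zero.mp h).resolve_left (sub_ne_zero.mpr hxz)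
  have e2 : x * y + y * z + z * x = -1 := by linear_combination (x + y) * e1 - hxy'
  exact ⟨e1, e2, by linear_combination hx + x * e2 - x ^ 2 * e1⟩

-- `8 (x³ - x - 1) = (2x + 3)(4x² - 6x + 5) - 23`
lemma two_mul_add_three_ne_zero (h23 : (23 : K) ≠ 0) (hx : x ^ 3 = x + 1) : 2 * x + 3 ≠ 0 := by
  intro h
  exact h23 (by linear_combination (4 * x ^ 2 - 6 * x + 5) * h - 8 * hx)

/-- Equals `(x + 1) / ((x - y) (x - z))` when `x, y, z` are the roots of `X³ - X - 1`. -/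
def binetCoeff (x : K) : K := (x ^ 2 + x) / (2 * x + 3)

lemma map_binetCoeff {L : Type*} [Field L] (f : K →+* L) (x : K) :
    f (binetCoeff x) = binetCoeff (f x) := by
  simp [binetCoeff, map_div₀, map_ofNat]

lemma div_sub_mul_sub_eq_binetCoeff (hx : x ^ 3 = x + 1) (hy : y ^ 3 = y + 1) (hz : z ^ 3 = z + 1)
    (hxy : x ≠ y) (hxz : x ≠ z) (hyz : y ≠ z) :
    (x + 1) / ((x - y) * (x - z)) = binetCoeff x := by
  obtain ⟨e1, -, e3⟩ := vieta_of_cube_eq_add_one hx hy hz hxy hxz hyz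
  have hd : x * ((x - y) * (x - z)) = 2 * x + 3 := by
    linear_combination 2 * hx - x ^ 2 * e1 + e3
  have hd0 : (x - y) * (x - z) ≠ 0 := mul_ne_zero (sub_ne_zero.mpr hxy) (sub_ne_zero.mpr hxz)
  have hx0 : x ≠ 0 := by rintro rfl; norm_num at hx
  rw [binetCoeff, ← hd, div_eq_div_iff hd0 (mul_ne_zero hx0 hd0)]
  ring

lemma binetCoeff_cubic (h23 : (23 : K) ≠ 0) (hx : x ^ 3 = x + 1) :
    23 * binetCoeff x ^ 3 - 5 * binetCoeff x - 1 = 0 := by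
  have hd := two_mul_add_three_ne_zero h23 hx
  have ht : binetCoeff x * (2 * x + 3) = x ^ 2 + x := div_mul_cancel₀ _ hd
  set t := binetCoeff x
  have h : (23 * t ^ 3 - 5 * t - 1) * (2 * x + 3) ^ 3 = 0 := by
    linear_combination (23 * x ^ 3 + 69 * x ^ 2 + 72 * x + 27) * hx
      + (23 * t ^ 2 * (2 * x + 3) ^ 2 + 23 * t * (2 * x + 3) * (x ^ 2 + x)
        + 23 * (x ^ 2 + x) ^ 2 - 5 * (2 * x + 3) ^ 2) * ht
  exact (mul_eq_zero.mp h).resolve_right (pow_ne_zero 3 hd)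

lemma binetCoeff_mul_mul (hx : x ^ 3 = x + 1) (hy : y ^ 3 = y + 1) (hz : z ^ 3 = z + 1)
    (hxy : x ≠ y) (hxz : x ≠ z) (hyz : y ≠ z) :
    binetCoeff x * binetCoeff y * binetCoeff z = 1 / 23 := by
  obtain ⟨e1, e2, e3⟩ := vieta_of_cube_eq_add_one hx hy hz hxy hxz hyz
  have hden : (2 * x + 3) * (2 * y + 3) * (2 * z + 3) = 23 := by
    linear_combination 8 * e3 + 12 * e2 + 18 * e1
  have hnum : (x ^ 2 + x) * (y ^ 2 + y) * (z ^ 2 + z) = 1 := by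
    linear_combination (x * y * z + x * y + y * z + z * x + x + y + z + 2) * e3 + e2 + e1
  simp only [binetCoeff, div_mul_div_comm, hden, hnum]

end Field

lemma bounds_of_cubic_eq_zero {t : ℝ} (ht : 23 * t ^ 3 - 5 * t - 1 = 0) :
    0.54 < t ∧ t < 0.55 := by
  constructor <;>
    nlinarith [sq_nonneg (t - 0.545), sq_nonneg (t + 0.27), sq_nonneg (t + 0.3), sq_nonneg t]

/-- The Binet coefficients `a, b, c` are the three roots of `23x³ − 5x − 1`; moreover
`|a|, |b|, |c| < 1`, `a` is real with `0.54 < a < 0.55`, and `0.28 < |b| = |c| < 0.29`. -/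
theorem binet_coefficients_minimal_polynomial
    (α β γ : ℂ) (hα : α ^ 3 = α + 1) (hαre : α.im = 0)
    (hβ : β ^ 3 = β + 1) (hβim : β.im ≠ 0) (hγ : γ = starRingEnd ℂ β)
    (a b c : ℂ)
    (ha : a = (α + 1) / ((α - β) * (α - γ)))
    (hb : b = (β + 1) / ((β - α) * (β - γ)))
    (hc : c = (γ + 1) / ((γ - α) * (γ - β))) :
    23 * a ^ 3 - 5 * a - 1 = 0 ∧ 23 * b ^ 3 - 5 * b - 1 = 0 ∧ 23 * c ^ 3 - 5 * c - 1 = 0 ∧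
      ‖a‖ < 1 ∧ ‖b‖ < 1 ∧ ‖c‖ < 1 ∧
      a.im = 0 ∧ 0.54 < a.re ∧ a.re < 0.55 ∧
      ‖b‖ = ‖c‖ ∧ 0.28 < ‖b‖ ∧ ‖b‖ < 0.29 := by
  have h23 : (23 : ℂ) ≠ 0 := by norm_num
  have hγ3 : γ ^ 3 = γ + 1 := by rw [hγ, ← map_pow, hβ, map_add, map_one]
  have hγim : γ.im = -β.im := by simp [hγ]
  have hαβ : α ≠ β := fun h => hβim (h ▸ hαre)
  have hαγ : α ≠ γ := fun h => hβim (by linarith [congrArg Complex.im h])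
  have hβγ : β ≠ γ := fun h => hβim (by linarith [congrArg Complex.im h])
  rw [div_sub_mul_sub_eq_binetCoeff hα hβ hγ3 hαβ hαγ hβγ] at ha
  rw [div_sub_mul_sub_eq_binetCoeff hβ hα hγ3 hαβ.symm hβγ hαγ] at hb
  rw [div_sub_mul_sub_eq_binetCoeff hγ3 hα hβ hαγ.symm hβγ.symm hαβ] at hc
  have hαr : (α.re : ℂ) = α := Complex.ext rfl (by simp [hαre])
  obtain ⟨s, hs⟩ : ∃ s : ℝ, a = s := ⟨binetCoeff α.re, by
    rw [ha, ← Complex.ofRealHom_eq_coe, map_binetCoeff, Complex.ofRealHom_eq_coe, hαr]⟩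
  have hcb : c = starRingEnd ℂ b := by rw [hc, hb, hγ, map_binetCoeff]
  have hbc : ‖b‖ = ‖c‖ := by rw [hcb, Complex.norm_conj]
  obtain ⟨hs₁, hs₂⟩ : 0.54 < s ∧ s < 0.55 := by
    apply bounds_of_cubic_eq_zero
    exact_mod_cast hs ▸ ha ▸ binetCoeff_cubic h23 hα
  have hnorm : ‖b‖ ^ 2 * s = 1 / 23 := by
    have habc := binetCoeff_mul_mul hα hβ hγ3 hαβ hαγ hβγ
    rw [← ha, ← hb, ← hc, hcb, hs, mul_assoc, mul_comm, Complex.mul_conj] at habc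
    rw [Complex.sq_norm, ← Complex.ofReal_inj]
    push_cast
    exact habc
  have hb₁ : 0.28 < ‖b‖ := by nlinarith [norm_nonneg b]
  have hb₂ : ‖b‖ < 0.29 := by nlinarith [norm_nonneg b]
  refine ⟨ha ▸ binetCoeff_cubic h23 hα, hb ▸ binetCoeff_cubic h23 hβ,
    hc ▸ binetCoeff_cubic h23 hγ3, ?_, by linarith, by linarith, by simp [hs],
    by simpa [hs], by simpa [hs], hbc, hb₁, hb₂⟩
  rw [hs, Complex.norm_real, Real.norm_eq_abs, abs_lt]
  constructor <;> linarith
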